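/- Let N ≥ 1, 0 < γ < min{2, N}, p = p₀ := 1 + 2/N and 0 < T < ∞. There exists a constant C > 0, depending only on N and γ, with the following property: if z ∈ ℝ^N satisfies |z| > T^{1/2} and ρ > 0 satisfies ρ² < T/3, then for every s with ρ² < s < T/3, one has ∫_{ℝ^N} G(y,s) |y + z|^{γ/(p−1)} dy ≤ C ρ^{−N} ∫_{B(z,ρ)} |y|^{γ/(p−1)} dy. -/

import Mathlib

open MeasureTheory Real
open scoped ENNReal NNReal

/-- The Gaussian heat kernel on `ℝ^N`. -/
noncomputable def G (N : ℕ) (x : EuclideanSpace ℝ (Fin N)) (t : ℝ) : ℝ :=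
  (4 * Real.pi * t) ^ (-(N : ℝ) / 2) * Real.exp (-‖x‖ ^ 2 / (4 * t))

/-- The right-hand side of the Duhamel formulation of the Hardy parabolic equation
`∂_t u - Δu = |x|^{-γ} u^p` with a nonnegative Radon measure `μ` as initial data. -/
noncomputable def hardyRHS (N : ℕ) (p γ : ℝ) (μ : Measure (EuclideanSpace ℝ (Fin N)))
    (u : EuclideanSpace ℝ (Fin N) → ℝ → ℝ) (x : EuclideanSpace ℝ (Fin N)) (t : ℝ) : ℝ≥0∞ :=
  (∫⁻ y, ENNReal.ofReal (G N (x - y) t) ∂μ) +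
    ∫⁻ s in Set.Ioo (0 : ℝ) t,
      ∫⁻ y, ENNReal.ofReal (G N (x - y) (t - s) * ‖y‖ ^ (-γ) * u y s ^ p)

/-- `u` is a solution of the Hardy parabolic equation `∂_t u - Δu = |x|^{-γ} u^p`
with initial data the nonnegative Radon measure `μ` on `ℝ^N × [0,T)`. -/
def IsSolution (N : ℕ) (p γ : ℝ) (μ : Measure (EuclideanSpace ℝ (Fin N))) (T : ℝ)
    (u : EuclideanSpace ℝ (Fin N) → ℝ → ℝ) : Prop :=
  Measurable (Function.uncurry u) ∧ (∀ x t, 0 ≤ u x t) ∧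
    ∀ᵐ x ∂(volume : Measure (EuclideanSpace ℝ (Fin N))), ∀ t : ℝ, 0 < t → t < T →
      hardyRHS N p γ μ u x t ≠ ⊤ ∧ ENNReal.ofReal (u x t) = hardyRHS N p γ μ u x t

/-!
Both sides are comparable to `|z|^α`, `α = γ/(p-1) ≥ 0`. For the left side, split
`G(y,s) = 2^{N/2} G(y,2s) e^{-|y|²/(8s)}`: the extra Gaussian factor absorbs `|y|^α` up to
`C s^{α/2} ≤ C |z|^α` (as `s < T/3 < |z|²`), and `G(·,2s)` has total mass one. For the right
side, `ρ² < T/3 < |z|²/3` gives `3ρ < 2|z|`, so `|y| ≥ |z| - ρ ≥ |z|/3` on `B(z,ρ)`, whose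
volume is `ρ^N |B(0,1)|`.
-/

open Metric Module

lemma rpow_mul_exp_neg_le {x a : ℝ} (hx : 0 ≤ x) (ha : 0 ≤ a) :
    x ^ a * exp (-x) ≤ (a + 1) ^ a := by
  have ha1 : 0 < a + 1 := by linarith
  have hlin : x / (a + 1) ≤ exp (x / (a + 1)) := by linarith [add_one_le_exp (x / (a + 1))]
  calc x ^ a * exp (-x) = (a + 1) ^ a * (x / (a + 1)) ^ a * exp (-x) := by
        rw [div_rpow hx ha1.le, mul_div_cancel₀ _ (rpow_pos_of_pos ha1 a).ne']
    _ ≤ (a + 1) ^ a * exp (x / (a + 1)) ^ a * exp (-x) := by gcongr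
    _ = (a + 1) ^ a * exp (-(x / (a + 1))) := by
        rw [← exp_mul, mul_assoc, ← exp_add]; congr 2; field_simp; ring
    _ ≤ (a + 1) ^ a :=
        mul_le_of_le_one_right (by positivity) (exp_le_one_iff.mpr (neg_nonpos.mpr (by positivity)))

lemma rpow_mul_exp_neg_sq_div_le {r a σ : ℝ} (hr : 0 ≤ r) (ha : 0 ≤ a) (hσ : 0 < σ) :
    r ^ a * exp (-r ^ 2 / σ) ≤ ((a / 2 + 1) * σ) ^ (a / 2) := by
  have hr2 : r ^ a = σ ^ (a / 2) * (r ^ 2 / σ) ^ (a / 2) := by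
    rw [← mul_rpow hσ.le (by positivity), mul_div_cancel₀ _ hσ.ne', ← rpow_natCast,
      ← rpow_mul hr]
    ring_nf
  rw [hr2, mul_assoc, neg_div, mul_rpow (by linarith) hσ.le, mul_comm _ (σ ^ (a / 2))]
  gcongr
  exact rpow_mul_exp_neg_le (by positivity) (by positivity)

lemma rpow_add_le_two_rpow_mul {a b p : ℝ} (ha : 0 ≤ a) (hb : 0 ≤ b) (hp : 0 ≤ p) :
    (a + b) ^ p ≤ 2 ^ p * (a ^ p + b ^ p) := by
  calc (a + b) ^ p ≤ (2 * max a b) ^ p := by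
        gcongr; linarith [le_max_left a b, le_max_right a b]
    _ = 2 ^ p * max (a ^ p) (b ^ p) := by
        rw [mul_rpow zero_le_two (le_max_of_le_left ha),
          (monotoneOn_rpow_Ici_of_exponent_nonneg hp).map_max ha hb]
    _ ≤ 2 ^ p * (a ^ p + b ^ p) := by
        gcongr; exact max_le_add_of_nonneg (by positivity) (by positivity)

lemma integral_G (N : ℕ) {t : ℝ} (ht : 0 < t) : ∫ y, G N y t = 1 := by
  have hexp : ∀ y : EuclideanSpace ℝ (Fin N),
      exp (-‖y‖ ^ 2 / (4 * t)) = exp (-(4 * t)⁻¹ * ‖y‖ ^ 2) := fun y => by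
    congr 1; ring
  simp only [G, hexp, integral_const_mul,
    GaussianFourier.integral_rexp_neg_mul_sq_norm (by positivity : 0 < (4 * t)⁻¹),
    finrank_euclideanSpace_fin, div_inv_eq_mul]
  rw [neg_div, rpow_neg (by positivity), show π * (4 * t) = 4 * π * t by ring,
    inv_mul_cancel₀ (by positivity)]

lemma integrable_G (N : ℕ) {t : ℝ} (ht : 0 < t) : Integrable (fun y => G N y t) :=
  Integrable.of_integral_ne_zero (by rw [integral_G N ht]; exact one_ne_zero)

lemma G_eq_two_rpow_mul_G_two_mul (N : ℕ) (y : EuclideanSpace ℝ (Fin N)) {t : ℝ}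
    (ht : 0 < t) :
    G N y t = 2 ^ ((N : ℝ) / 2) * G N y (2 * t) * exp (-‖y‖ ^ 2 / (8 * t)) := by
  have hpow : (4 * π * t) ^ (-(N : ℝ) / 2)
      = 2 ^ ((N : ℝ) / 2) * (4 * π * (2 * t)) ^ (-(N : ℝ) / 2) := by
    rw [show 4 * π * (2 * t) = 2 * (4 * π * t) by ring, mul_rpow zero_le_two (by positivity),
      ← mul_assoc, ← rpow_add two_pos, neg_div, add_neg_cancel, rpow_zero, one_mul]
  have hexp : exp (-‖y‖ ^ 2 / (4 * t))
      = exp (-‖y‖ ^ 2 / (4 * (2 * t))) * exp (-‖y‖ ^ 2 / (8 * t)) := by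
    rw [← exp_add]; congr 1; field_simp; ring
  simp only [G, hpow, hexp]
  ring

lemma G_nonneg (N : ℕ) (y : EuclideanSpace ℝ (Fin N)) {t : ℝ} (ht : 0 < t) : 0 ≤ G N y t :=
  mul_nonneg (rpow_nonneg (by positivity) _) (exp_pos _).le

lemma exp_neg_sq_div_mul_rpow_norm_add_le {E : Type*} [NormedAddCommGroup E] {α s : ℝ}
    (hα : 0 ≤ α) (hs : 0 < s) {y z : E} (hsz : s ≤ ‖z‖ ^ 2) :
    exp (-‖y‖ ^ 2 / (8 * s)) * ‖y + z‖ ^ α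
      ≤ 2 ^ α * ((4 * α + 8) ^ (α / 2) + 1) * ‖z‖ ^ α := by
  set e := exp (-‖y‖ ^ 2 / (8 * s))
  have he1 : e ≤ 1 :=
    exp_le_one_iff.mpr (div_nonpos_of_nonpos_of_nonneg (by simp) (by positivity))
  have hy : e * ‖y‖ ^ α ≤ (4 * α + 8) ^ (α / 2) * ‖z‖ ^ α :=
    calc e * ‖y‖ ^ α ≤ ((α / 2 + 1) * (8 * s)) ^ (α / 2) := by
          rw [mul_comm]; exact rpow_mul_exp_neg_sq_div_le (norm_nonneg y) hα (by positivity)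
      _ ≤ ((4 * α + 8) * ‖z‖ ^ 2) ^ (α / 2) :=
          rpow_le_rpow (by positivity) (by nlinarith) (by positivity)
      _ = (4 * α + 8) ^ (α / 2) * ‖z‖ ^ α := by
          rw [mul_rpow (by positivity) (by positivity), ← rpow_natCast,
            ← rpow_mul (norm_nonneg z)]
          ring_nf
  have hz : e * ‖z‖ ^ α ≤ ‖z‖ ^ α := mul_le_of_le_one_left (by positivity) he1
  calc e * ‖y + z‖ ^ α ≤ e * (2 ^ α * (‖y‖ ^ α + ‖z‖ ^ α)) := by
        gcongr
        exact (rpow_le_rpow (norm_nonneg _) (norm_add_le y z) hα).trans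
          (rpow_add_le_two_rpow_mul (norm_nonneg y) (norm_nonneg z) hα)
    _ = 2 ^ α * (e * ‖y‖ ^ α + e * ‖z‖ ^ α) := by ring
    _ ≤ 2 ^ α * ((4 * α + 8) ^ (α / 2) * ‖z‖ ^ α + ‖z‖ ^ α) := by gcongr
    _ = 2 ^ α * ((4 * α + 8) ^ (α / 2) + 1) * ‖z‖ ^ α := by ring

theorem exists_lintegral_G_mul_rpow_norm_add_le (N : ℕ) {α : ℝ} (hα : 0 ≤ α) :
    ∃ K > 0, ∀ s > 0, ∀ z : EuclideanSpace ℝ (Fin N), s ≤ ‖z‖ ^ 2 →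
      ∫⁻ y, ENNReal.ofReal (G N y s * ‖y + z‖ ^ α)
        ≤ ENNReal.ofReal (K * ‖z‖ ^ α) := by
  set K := 2 ^ ((N : ℝ) / 2) * (2 ^ α * ((4 * α + 8) ^ (α / 2) + 1))
  refine ⟨K, by positivity, fun s hs z hsz => ?_⟩
  have hpointwise : ∀ y, G N y s * ‖y + z‖ ^ α ≤ K * ‖z‖ ^ α * G N y (2 * s) := by
    intro y
    have hG := G_nonneg N y (by positivity : 0 < 2 * s)
    have hbound := mul_le_mul_of_nonneg_left
      (exp_neg_sq_div_mul_rpow_norm_add_le (y := y) hα hs hsz)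
      (by positivity : 0 ≤ 2 ^ ((N : ℝ) / 2) * G N y (2 * s))
    rw [G_eq_two_rpow_mul_G_two_mul N y hs]
    linarith
  calc ∫⁻ y, ENNReal.ofReal (G N y s * ‖y + z‖ ^ α)
      ≤ ∫⁻ y, ENNReal.ofReal (K * ‖z‖ ^ α * G N y (2 * s)) :=
        lintegral_mono fun y => ENNReal.ofReal_le_ofReal (hpointwise y)
    _ = ENNReal.ofReal (∫ y, K * ‖z‖ ^ α * G N y (2 * s)) :=
        (ofReal_integral_eq_lintegral_ofReal ((integrable_G N (by positivity)).const_mul _)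
          (Filter.Eventually.of_forall fun y =>
            mul_nonneg (by positivity) (G_nonneg N y (by positivity)))).symm
    _ = ENNReal.ofReal (K * ‖z‖ ^ α) := by
        rw [integral_const_mul, integral_G N (by positivity), mul_one]

section HaarBall

variable {E : Type*} [NormedAddCommGroup E] [NormedSpace ℝ E] [FiniteDimensional ℝ E]
  [MeasurableSpace E] [BorelSpace E] (μ : Measure E) [μ.IsAddHaarMeasure]

theorem ofReal_le_setLIntegral_ball_rpow_norm {α ρ : ℝ} (hα : 0 ≤ α) (hρ : 0 < ρ) {z : E}
    (hρz : ρ ≤ ‖z‖) :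
    ENNReal.ofReal ((‖z‖ - ρ) ^ α * ρ ^ finrank ℝ E * μ.real (ball 0 1))
      ≤ ∫⁻ y in ball z ρ, ENNReal.ofReal (‖y‖ ^ α) ∂μ := by
  have hball : μ (ball z ρ) = ENNReal.ofReal (ρ ^ finrank ℝ E * μ.real (ball 0 1)) := by
    rw [Measure.addHaar_ball_of_pos μ z hρ, ENNReal.ofReal_mul (by positivity),
      ofReal_measureReal measure_ball_lt_top.ne]
  rw [mul_assoc, ENNReal.ofReal_mul (by positivity), ← hball, ← setLIntegral_const]
  refine setLIntegral_mono' measurableSet_ball fun y hy => ?_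
  refine ENNReal.ofReal_le_ofReal (rpow_le_rpow (by linarith) ?_ hα)
  have := norm_sub_norm_le z y
  rw [mem_ball, dist_eq_norm, norm_sub_rev] at hy
  linarith

theorem ofReal_rpow_norm_le_mul_setLIntegral_ball {α ρ : ℝ} (hα : 0 ≤ α) (hρ : 0 < ρ)
    {z : E} (hρz : 3 * ρ ≤ 2 * ‖z‖) :
    ENNReal.ofReal (‖z‖ ^ α)
      ≤ ENNReal.ofReal (3 ^ α / μ.real (ball 0 1) * ρ ^ (-(finrank ℝ E : ℝ))) *
          ∫⁻ y in ball z ρ, ENNReal.ofReal (‖y‖ ^ α) ∂μ := by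
  have hv : 0 < μ.real (ball 0 1) :=
    ENNReal.toReal_pos (measure_ball_pos μ 0 one_pos).ne' measure_ball_lt_top.ne
  have hρd : ρ ^ (-(finrank ℝ E : ℝ)) * ρ ^ finrank ℝ E = 1 := by
    rw [rpow_neg hρ.le, rpow_natCast, inv_mul_cancel₀ (by positivity)]
  refine le_trans ?_ (mul_le_mul_right
    (ofReal_le_setLIntegral_ball_rpow_norm μ hα hρ (by linarith)) _)
  rw [← ENNReal.ofReal_mul (mul_nonneg (by positivity) (rpow_nonneg hρ.le _))]
  refine ENNReal.ofReal_le_ofReal ?_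
  calc ‖z‖ ^ α ≤ (3 * (‖z‖ - ρ)) ^ α := by gcongr; linarith
    _ = 3 ^ α / μ.real (ball 0 1) * ρ ^ (-(finrank ℝ E : ℝ)) *
          ((‖z‖ - ρ) ^ α * ρ ^ finrank ℝ E * μ.real (ball 0 1)) := by
      rw [mul_rpow zero_le_three (by linarith), show
        3 ^ α / μ.real (ball 0 1) * ρ ^ (-(finrank ℝ E : ℝ)) *
          ((‖z‖ - ρ) ^ α * ρ ^ finrank ℝ E * μ.real (ball 0 1)) =
        3 ^ α * (‖z‖ - ρ) ^ α * (ρ ^ (-(finrank ℝ E : ℝ)) * ρ ^ finrank ℝ E) *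
          (μ.real (ball 0 1) / μ.real (ball 0 1)) by ring, hρd, div_self hv.ne']
      ring

end HaarBall

theorem statement11_general (N : ℕ) (γ : ℝ)
    (hγ0 : 0 < γ) (p : ℝ) (hp : p = 1 + 2 / N) :
    ∃ C : ℝ, 0 < C ∧
      ∀ T : ℝ, 0 < T →
      ∀ z : EuclideanSpace ℝ (Fin N), Real.sqrt T < ‖z‖ →
      ∀ ρ : ℝ, 0 < ρ → ρ ^ 2 < T / 3 →
      ∀ s : ℝ, ρ ^ 2 < s → s < T / 3 →
        (∫⁻ y, ENNReal.ofReal (G N y s * ‖y + z‖ ^ (γ / (p - 1))))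
          ≤ ENNReal.ofReal (C * ρ ^ (-(N : ℝ))) *
              ∫⁻ y in Metric.ball z ρ, ENNReal.ofReal (‖y‖ ^ (γ / (p - 1))) := by
  set α := γ / (p - 1)
  have hα : 0 ≤ α := div_nonneg hγ0.le (by rw [hp, add_sub_cancel_left]; positivity)
  obtain ⟨K, hK, hmoment⟩ := exists_lintegral_G_mul_rpow_norm_add_le N hα
  set v := volume.real (ball (0 : EuclideanSpace ℝ (Fin N)) 1)
  have hv : 0 < v := ENNReal.toReal_pos (measure_ball_pos volume 0 one_pos).ne'
    measure_ball_lt_top.ne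
  refine ⟨K * (3 ^ α / v), by positivity, fun T hT z hz ρ hρ hρT s hρs hsT => ?_⟩
  have hTz : T < ‖z‖ ^ 2 := by
    simpa only [sq_sqrt hT.le] using sq_lt_sq' (by linarith [sqrt_nonneg T, norm_nonneg z]) hz
  have hρz : 3 * ρ ≤ 2 * ‖z‖ := by nlinarith [norm_nonneg z]
  have hball := ofReal_rpow_norm_le_mul_setLIntegral_ball volume hα hρ hρz
  rw [finrank_euclideanSpace_fin] at hball
  calc ∫⁻ y, ENNReal.ofReal (G N y s * ‖y + z‖ ^ α)
      ≤ ENNReal.ofReal K * ENNReal.ofReal (‖z‖ ^ α) := by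
        rw [← ENNReal.ofReal_mul hK.le]
        exact hmoment s ((sq_nonneg ρ).trans_lt hρs) z (by linarith)
    _ ≤ ENNReal.ofReal K * (ENNReal.ofReal (3 ^ α / v * ρ ^ (-(N : ℝ))) *
          ∫⁻ y in ball z ρ, ENNReal.ofReal (‖y‖ ^ α)) := by gcongr
    _ = _ := by
        rw [← mul_assoc, ← ENNReal.ofReal_mul hK.le, mul_assoc]

/-- Lemma 4.1, case θ = 2, p = p₀ = 1 + 2/N. If `|z| > √T` and
`ρ² < s < T/3`, then `∫ G(y,s) |y+z|^{γ/(p-1)} dy ≤ C ρ^{-N} ∫_{B(z,ρ)} |y|^{γ/(p-1)} dy`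
with `C` depending only on `N` and `γ`. -/
theorem statement11 (N : ℕ) (hN : 1 ≤ N) (γ : ℝ)
    (hγ0 : 0 < γ) (hγ2 : γ < 2) (hγN : γ < N) (p : ℝ) (hp : p = 1 + 2 / N) :
    ∃ C : ℝ, 0 < C ∧
      ∀ T : ℝ, 0 < T →
      ∀ z : EuclideanSpace ℝ (Fin N), Real.sqrt T < ‖z‖ →
      ∀ ρ : ℝ, 0 < ρ → ρ ^ 2 < T / 3 →
      ∀ s : ℝ, ρ ^ 2 < s → s < T / 3 →
        (∫⁻ y, ENNReal.ofReal (G N y s * ‖y + z‖ ^ (γ / (p - 1))))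
          ≤ ENNReal.ofReal (C * ρ ^ (-(N : ℝ))) *
              ∫⁻ y in Metric.ball z ρ, ENNReal.ofReal (‖y‖ ^ (γ / (p - 1))) :=
  statement11_general N γ hγ0 p hp
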